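/- arXiv:1805.04371 — 5 statements merged into one kernel-verified Lean document; each statement's English description precedes it below -/
import Mathlib

section
/- Let σ > 0 and θ₀, θ₁ ≥ 0. The function r : (0,1) → ℝ defined by r(x) = (σ + log(1-x) - θ₁x)(x-1) + θ₀x has a unique root in (0,1). -/
/-!
Writing `(σ + log (1 - x) - θ₁ x)(x - 1) = -(1 - x) log (1 - x) + σ x - σ - θ₁ x² + θ₁ x` shows that
`r` is the strictly concave function `x ↦ negMulLog (1 - x)` plus a concave quadratic, hence strictly
concave on `(-∞, 1]`. Since `r 0 = -σ < 0` and `r` is positive where `log (1 - x) = -σ - θ₁ - 1`,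
the intermediate value theorem gives a root in `(0, 1)`; as `r 1 = θ₀ ≥ 0`, strict concavity rules
out a second root below `1`.
-/

open Real Set

theorem strictConcaveOn_negMulLog_one_sub :
    StrictConcaveOn ℝ (Iic 1) fun x => negMulLog (1 - x) := by
  refine ⟨convex_Iic 1, fun x hx y hy hxy a b ha hb hab => ?_⟩
  have hcomb : 1 - (a • x + b • y) = a • (1 - x) + b • (1 - y) := by
    simp only [smul_eq_mul]; linear_combination -hab
  dsimp only
  rw [hcomb]
  exact strictConcaveOn_negMulLog.2 (mem_Ici.2 (sub_nonneg.2 hx)) (mem_Ici.2 (sub_nonneg.2 hy))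
    (by rwa [Ne, sub_right_inj]) ha hb hab

theorem StrictConcaveOn.eq_of_map_eq_of_le_map {s : Set ℝ} {f : ℝ → ℝ} {b c x y : ℝ}
    (hf : StrictConcaveOn ℝ s f) (hb : b ∈ s) (hfb : c ≤ f b)
    (hx : x ∈ s) (hxb : x < b) (hfx : f x = c) (hy : y ∈ s) (hyb : y < b) (hfy : f y = c) :
    x = y := by
  wlog hxy : x < y generalizing x y
  · rcases (not_lt.1 hxy).eq_or_lt with h | h
    · exact h.symm
    · exact (this hy hyb hfy hx hxb hfx h).symm
  have hyseg : y ∈ openSegment ℝ x b := by rw [openSegment_eq_Ioo hxb]; exact ⟨hxy, hyb⟩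
  have := hf.lt_on_openSegment hx hb hxb.ne hyseg
  rw [hfx, hfy, min_eq_left hfb] at this
  exact absurd this (lt_irrefl c)

theorem concaveOn_linear_sub_sq {a : ℝ} (ha : 0 ≤ a) (c d : ℝ) :
    ConcaveOn ℝ univ fun x : ℝ => c * x - a * x ^ 2 + d := by
  refine ⟨convex_univ, fun x _ y _ s t hs ht hst => ?_⟩
  obtain rfl : t = 1 - s := by linarith
  simp only [smul_eq_mul]
  nlinarith [mul_nonneg (mul_nonneg hs ht) (mul_nonneg ha (sq_nonneg (x - y)))]

theorem exists_mem_Ioo_zero_one_pos (σ θ₀ θ₁ : ℝ) (hσ : 0 < σ) (hθ₀ : 0 ≤ θ₀) (hθ₁ : 0 ≤ θ₁) :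
    ∃ x ∈ Ioo (0 : ℝ) 1, 0 < (σ + log (1 - x) - θ₁ * x) * (x - 1) + θ₀ * x := by
  set x := 1 - exp (-σ - θ₁ - 1)
  have hx : x ∈ Ioo 0 1 :=
    ⟨sub_pos.2 (exp_lt_one_iff.2 (by linarith)), sub_lt_self _ (exp_pos _)⟩
  have hlog : log (1 - x) = -σ - θ₁ - 1 := by simp [x]
  refine ⟨x, hx, ?_⟩
  rw [hlog]
  nlinarith [hx.1, hx.2, mul_nonneg hθ₁ hx.1.le]

theorem unique_root (σ θ₀ θ₁ : ℝ) (hσ : 0 < σ) (hθ₀ : 0 ≤ θ₀) (hθ₁ : 0 ≤ θ₁)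
    (r : ℝ → ℝ)
    (hr : ∀ x, r x = (σ + Real.log (1 - x) - θ₁ * x) * (x - 1) + θ₀ * x) :
    ∃! x : ℝ, x ∈ Set.Ioo (0:ℝ) 1 ∧ r x = 0 := by
  have hr' : r = fun x => negMulLog (1 - x) + ((σ + θ₁ + θ₀) * x - θ₁ * x ^ 2 + -σ) :=
    funext fun x => by rw [hr, negMulLog]; ring
  have hcont : Continuous r := by rw [hr']; fun_prop
  have hconc : StrictConcaveOn ℝ (Iic 1) r := by
    rw [hr']
    exact strictConcaveOn_negMulLog_one_sub.add_concaveOn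
      ((concaveOn_linear_sub_sq hθ₁ _ _).subset (subset_univ _) (convex_Iic 1))
  have hr0 : r 0 = -σ := by simp [hr]
  have hr1 : r 1 = θ₀ := by simp [hr]
  obtain ⟨x₀, hx₀, hpos⟩ := exists_mem_Ioo_zero_one_pos σ θ₀ θ₁ hσ hθ₀ hθ₁
  rw [← hr] at hpos
  obtain ⟨c, hc, hrc⟩ :=
    intermediate_value_Ioo hx₀.1.le hcont.continuousOn ⟨by linarith, hpos⟩
  have hc1 : c < 1 := hc.2.trans hx₀.2
  refine ⟨c, ⟨⟨hc.1, hc1⟩, hrc⟩, fun y ⟨hy, hry⟩ => ?_⟩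
  exact hconc.eq_of_map_eq_of_le_map self_mem_Iic (hr1 ▸ hθ₀) hy.2.le hy.2 hry hc1.le hc1 hrc
end

section
/- Let σ > 0 and θ₁ > 0, and let W denote the principal Lambert W function on [0,∞) (the inverse of x ↦ x e^x on [0,∞)). Then ρ = 1 - W(θ₁ e^{θ₁-σ})/θ₁ satisfies (σ + log(1-ρ) - θ₁ρ)(ρ-1) = 0 and ρ ∈ (0,1). -/
theorem root_lambertW (σ θ₁ : ℝ) (hσ : 0 < σ) (hθ₁ : 0 < θ₁)
    (W : ℝ → ℝ)
    (hW_nonneg : ∀ y, 0 ≤ y → 0 ≤ W y)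
    (hW_inv : ∀ y, 0 ≤ y → W y * Real.exp (W y) = y)
    (hW_inv' : ∀ x, 0 ≤ x → W (x * Real.exp x) = x)
    (ρ : ℝ) (hρ : ρ = 1 - W (θ₁ * Real.exp (θ₁ - σ)) / θ₁) :
    (σ + Real.log (1 - ρ) - θ₁ * ρ) * (ρ - 1) = 0 ∧ ρ ∈ Set.Ioo (0:ℝ) 1 := by
  set y : ℝ := θ₁ * Real.exp (θ₁ - σ) with hy
  have hy0 : 0 < y := mul_pos hθ₁ (Real.exp_pos _)
  set w : ℝ := W y with hwdef
  have hw0 : 0 ≤ w := hW_nonneg y hy0.le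
  have hwe : w * Real.exp w = y := hW_inv y hy0.le
  have hwpos : 0 < w := by
    rcases hw0.lt_or_eq with h | h
    · exact h
    · exfalso
      rw [← h, zero_mul] at hwe
      exact hy0.ne' hwe.symm
  have hwlt : w < θ₁ := by
    by_contra h
    push_neg at h
    have h1 : θ₁ * Real.exp θ₁ ≤ w * Real.exp w :=
      mul_le_mul h (Real.exp_le_exp.mpr h) (Real.exp_pos _).le hw0
    rw [hwe, hy] at h1
    have h2 : Real.exp (θ₁ - σ) < Real.exp θ₁ :=
      Real.exp_lt_exp.mpr (by linarith)
    nlinarith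
  have hlog : Real.log w + w = Real.log θ₁ + (θ₁ - σ) := by
    have := congrArg Real.log hwe
    rwa [Real.log_mul hwpos.ne' (Real.exp_pos _).ne', Real.log_exp, hy,
      Real.log_mul hθ₁.ne' (Real.exp_pos _).ne', Real.log_exp] at this
  have hρ1 : 1 - ρ = w / θ₁ := by rw [hρ]; ring
  have hρlt : ρ < 1 := by
    rw [hρ]
    have : 0 < w / θ₁ := div_pos hwpos hθ₁
    linarith
  have hρpos : 0 < ρ := by
    rw [hρ]
    have : w / θ₁ < 1 := (div_lt_one hθ₁).mpr hwlt
    linarith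
  refine ⟨?_, hρpos, hρlt⟩
  have hfac : σ + Real.log (1 - ρ) - θ₁ * ρ = 0 := by
    rw [hρ1, Real.log_div hwpos.ne' hθ₁.ne', hρ]
    field_simp
    linarith
  rw [hfac, zero_mul]
end

section
/- For the Wright–Fisher diffusion model with Λ({0}) = m₀ > 0, selection σ > 0, mutation rates θ₀ = 0, θ₁ ≥ 0, θ = θ₁, the probabilities pₙ = C · (2σ/m₀)^{n-1} / ((2+2θ/m₀)(3+2θ/m₀)⋯(n+2θ/m₀)) for n ≥ 1, with C = 1/₁F₁(1; 2+2θ/m₀; 2σ/m₀), satisfy the recursion (m₀(n+1)/2 + θ₁)pₙ₊₁ = σpₙ for all n ≥ 1 and ∑ₙ₌₁^∞ pₙ = 1. -/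
/-!
The weights `pₙ₊₁ / C` are the terms `xⁿ / (a)ₙ` of `₁F₁(1; a; x)` with `x = 2σ/m₀` and
`a = 2 + 2θ/m₀`. Consecutive terms differ by the factor `x / (a + n)`, which is exactly the
recursion once its coefficient is written as `(m₀/2)(a + n - 1)`; the ratio tends to `0`, so the
series converges, and it is at least its first term `1`, so `C` normalises the `pₙ`.
-/

open Finset Filter

/-- The `k`-th term `x ^ k / (a)ₖ` of `₁F₁(1; a; x)`, with the rising factorial written out. -/
noncomputable def kummerOneTerm (a x : ℝ) (k : ℕ) : ℝ :=
  x ^ k / ∏ i ∈ range k, (a + i)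

namespace kummerOneTerm

@[simp]
lemma zero (a x : ℝ) : kummerOneTerm a x 0 = 1 := by
  simp [kummerOneTerm]

-- No hypothesis on `a + k`: if it vanishes, both sides are `0` by Lean's `x / 0 = 0`.
lemma succ (a x : ℝ) (k : ℕ) :
    kummerOneTerm a x (k + 1) = kummerOneTerm a x k * (x / (a + k)) := by
  simp only [kummerOneTerm, prod_range_succ, pow_succ, mul_div_mul_comm]

lemma nonneg {a x : ℝ} (ha : 0 ≤ a) (hx : 0 ≤ x) (k : ℕ) : 0 ≤ kummerOneTerm a x k :=
  div_nonneg (pow_nonneg hx k) (prod_nonneg fun i _ => by positivity)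

lemma summable (a x : ℝ) : Summable (kummerOneTerm a x) := by
  refine summable_of_ratio_norm_eventually_le (r := 1 / 2) (by norm_num) ?_
  obtain ⟨N, hN⟩ := exists_nat_ge (2 * |x| + 1 - a)
  filter_upwards [eventually_ge_atTop N] with k hkN
  have hk : 2 * |x| + 1 ≤ a + k := by
    have : (N : ℝ) ≤ k := by exact_mod_cast hkN
    linarith
  have hpos : 0 < a + k := by linarith [abs_nonneg x]
  have hratio : ‖x‖ / ‖a + k‖ ≤ 1 / 2 := by
    rw [Real.norm_eq_abs, Real.norm_of_nonneg hpos.le, div_le_iff₀ hpos]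
    linarith
  rw [succ, norm_mul, norm_div, mul_comm (1 / 2)]
  exact mul_le_mul_of_nonneg_left hratio (norm_nonneg _)

lemma one_le_tsum {a x : ℝ} (ha : 0 ≤ a) (hx : 0 ≤ x) : 1 ≤ ∑' k, kummerOneTerm a x k :=
  zero a x ▸ (summable a x).le_tsum 0 fun k _ => nonneg ha hx k

end kummerOneTerm

theorem wright_fisher_stationary_no_beneficial_mutation
    (m₀ σ θ₁ θ : ℝ) (hm₀ : 0 < m₀) (hσ : 0 < σ) (hθ₁ : 0 ≤ θ₁) (hθ : θ = θ₁)
    (C : ℝ)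
    (hC : C = 1 / (∑' k : ℕ,
      (2 * σ / m₀) ^ k / (∏ i ∈ Finset.range k, (2 + 2 * θ / m₀ + i))))
    (p : ℕ → ℝ)
    (hp : ∀ n, 1 ≤ n →
      p n = C * (2 * σ / m₀) ^ (n - 1)
        / (∏ i ∈ Finset.range (n - 1), (2 + 2 * θ / m₀ + i))) :
    (∀ n : ℕ, 1 ≤ n →
      (m₀ * ((n : ℝ) + 1) / 2 + θ₁) * p (n + 1) = σ * p n) ∧
    (∑' n : ℕ, p (n + 1)) = 1 := by
  subst hθ
  set a := 2 + 2 * θ / m₀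
  set x := 2 * σ / m₀
  have ha : 0 < a := by positivity
  have hp_term : ∀ n, p (n + 1) = C * kummerOneTerm a x n := fun n => by
    rw [hp (n + 1) n.succ_pos, kummerOneTerm, mul_div_assoc, Nat.add_sub_cancel]
  constructor
  · rintro n hn
    obtain ⟨k, rfl⟩ := Nat.exists_eq_add_of_le' hn
    have hcoeff : m₀ * ((↑(k + 1) : ℝ) + 1) / 2 + θ = m₀ / 2 * (a + k) := by
      simp only [a]; push_cast; field_simp; ring
    have hσx : σ = m₀ / 2 * x := by simp only [x]; field_simp
    have hak : a + k ≠ 0 := by positivity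
    rw [hcoeff, hp_term, hp_term, kummerOneTerm.succ, hσx]
    field_simp
  · have hS : 0 < ∑' k, kummerOneTerm a x k :=
      one_pos.trans_le (kummerOneTerm.one_le_tsum ha.le (by positivity))
    rw [tsum_congr hp_term, tsum_mul_left, show C = 1 / ∑' k, kummerOneTerm a x k from hC]
    exact one_div_mul_cancel hS.ne'
end

section
/- Let ρ ∈ (0,1), x₀ ∈ (0,1), and for n ≥ 0 set b_n = 1 - x₀(1-(1-ρ)^n). Then for every n ≥ 0, (1-ρ)^{n-1}/(b_{n+1}b_n) = (1/(ρ(1-x₀)))·((1-ρ)^{n-1}/b_n - (1-ρ)^n/b_{n+1}); consequently ∑_{n=0}^∞ (1-ρ)^{n-1}/(b_{n+1}b_n) = 1/(ρ(1-ρ)(1-x₀)). -/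
/-!
Write `r = 1 - ρ`. The gap `b (n + 1) - r * b n = ρ * (1 - x₀)` does not depend on `n`, so a
partial-fraction split writes each term as `1 / (ρ * (1 - x₀))` times the difference of consecutive
values of `r ^ (n - 1) / b n`. The terms are positive and `r ^ (n - 1) / b n → 0`, so the series
telescopes to `1 / (ρ * (1 - x₀))` times the first value `r⁻¹ / b 0 = 1 / (1 - ρ)`.
-/

open Filter Topology

theorem zpow_sub_one_div_mul_eq_one_div_mul_sub {K : Type*} [Field K] {r u v : K} (hr : r ≠ 0)
    (hu : u ≠ 0) (hv : v ≠ 0) (hd : v - r * u ≠ 0) (m : ℤ) :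
    r ^ (m - 1) / (v * u) = 1 / (v - r * u) * (r ^ (m - 1) / u - r ^ m / v) := by
  rw [zpow_sub_one₀ hr]
  field_simp

-- Nonnegativity of the terms is what lets convergence of the partial sums give `HasSum`.
theorem hasSum_of_eq_mul_sub_succ {t f : ℕ → ℝ} {c l : ℝ} (ht : ∀ n, 0 ≤ t n)
    (htf : ∀ n, t n = c * (f n - f (n + 1))) (hf : Tendsto f atTop (𝓝 l)) :
    HasSum t (c * (f 0 - l)) := by
  rw [hasSum_iff_tendsto_nat_of_nonneg ht]
  simp_rw [htf, ← Finset.mul_sum, Finset.sum_range_sub']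
  exact (tendsto_const_nhds.sub hf).const_mul c

section

variable {x r : ℝ}

theorem one_sub_mul_one_sub_pow_pos (hx : x < 1) (hr₀ : 0 ≤ r) (hr₁ : r ≤ 1) (n : ℕ) :
    0 < 1 - x * (1 - r ^ n) := by
  have h : 0 ≤ 1 - r ^ n := sub_nonneg.2 (pow_le_one₀ hr₀ hr₁)
  rcases le_or_gt x 0 with hx₀ | hx₀
  · nlinarith [mul_nonpos_of_nonpos_of_nonneg hx₀ h]
  · nlinarith [mul_le_of_le_one_right hx₀.le (sub_le_self 1 (pow_nonneg hr₀ n))]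

theorem one_sub_mul_one_sub_pow_succ_sub (n : ℕ) :
    (1 - x * (1 - r ^ (n + 1))) - r * (1 - x * (1 - r ^ n)) = (1 - r) * (1 - x) := by
  ring

theorem tendsto_one_sub_mul_one_sub_pow (hr₀ : 0 ≤ r) (hr₁ : r < 1) :
    Tendsto (fun n : ℕ ↦ 1 - x * (1 - r ^ n)) atTop (𝓝 (1 - x)) := by
  have h := tendsto_pow_atTop_nhds_zero_of_lt_one hr₀ hr₁
  have h₁ : Tendsto (fun _ : ℕ ↦ (1 : ℝ)) atTop (𝓝 1) := tendsto_const_nhds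
  simpa using h₁.sub ((h₁.sub h).const_mul x)

theorem tendsto_zpow_sub_one_atTop_nhds_zero (hr₀ : 0 < r) (hr₁ : r < 1) :
    Tendsto (fun n : ℕ ↦ r ^ ((n : ℤ) - 1)) atTop (𝓝 0) := by
  simp_rw [zpow_sub_one₀ hr₀.ne', zpow_natCast]
  simpa using (tendsto_pow_atTop_nhds_zero_of_lt_one hr₀.le hr₁).mul_const r⁻¹

end

theorem telescoping_sum (ρ x₀ : ℝ) (hρ : ρ ∈ Set.Ioo (0:ℝ) 1) (hx₀ : x₀ ∈ Set.Ioo (0:ℝ) 1)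
    (b : ℕ → ℝ) (hb : ∀ n, b n = 1 - x₀ * (1 - (1 - ρ) ^ n)) :
    (∀ n : ℕ, (1 - ρ) ^ ((n : ℤ) - 1) / (b (n + 1) * b n)
      = (1 / (ρ * (1 - x₀))) *
        ((1 - ρ) ^ ((n : ℤ) - 1) / b n - (1 - ρ) ^ (n : ℤ) / b (n + 1))) ∧
    (∑' n : ℕ, (1 - ρ) ^ ((n : ℤ) - 1) / (b (n + 1) * b n))
      = 1 / (ρ * (1 - ρ) * (1 - x₀)) := by
  obtain ⟨hρ₀, hρ₁⟩ := hρ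
  have hr₀ : 0 < 1 - ρ := by linarith
  have hr₁ : 1 - ρ < 1 := by linarith
  have hx₀₁ : 0 < 1 - x₀ := by linarith [hx₀.2]
  have hb_pos (n : ℕ) : 0 < b n := hb n ▸ one_sub_mul_one_sub_pow_pos hx₀.2 hr₀.le hr₁.le n
  have hgap (n : ℕ) : b (n + 1) - (1 - ρ) * b n = ρ * (1 - x₀) := by
    rw [hb, hb, one_sub_mul_one_sub_pow_succ_sub, sub_sub_cancel]
  have hsplit (n : ℕ) : (1 - ρ) ^ ((n : ℤ) - 1) / (b (n + 1) * b n)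
      = (1 / (ρ * (1 - x₀))) *
        ((1 - ρ) ^ ((n : ℤ) - 1) / b n - (1 - ρ) ^ (n : ℤ) / b (n + 1)) := by
    rw [← hgap n]
    exact zpow_sub_one_div_mul_eq_one_div_mul_sub hr₀.ne' (hb_pos n).ne' (hb_pos _).ne'
      (hgap n ▸ (mul_pos hρ₀ hx₀₁).ne') n
  refine ⟨hsplit, ?_⟩
  have hb_lim : Tendsto b atTop (𝓝 (1 - x₀)) :=
    (tendsto_one_sub_mul_one_sub_pow hr₀.le hr₁).congr fun n ↦ (hb n).symm
  have hsum := hasSum_of_eq_mul_sub_succ (f := fun n : ℕ ↦ (1 - ρ) ^ ((n : ℤ) - 1) / b n)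
    (fun n ↦ (div_pos (zpow_pos hr₀ _) (mul_pos (hb_pos _) (hb_pos n))).le)
    (fun n ↦ by rw [hsplit, Nat.cast_succ, add_sub_cancel_right])
    ((tendsto_zpow_sub_one_atTop_nhds_zero hr₀ hr₁).div hb_lim hx₀₁.ne')
  rw [hsum.tsum_eq, hb, Nat.cast_zero, zero_sub, zpow_neg_one, pow_zero, sub_self, mul_zero,
    sub_zero, div_one, zero_div, sub_zero]
  field_simp
end

section
/- Let ρ ∈ (0,1), φ(y) = (1-ρ)y/(1-ρy), and a_k(y) = (1-ρ)^k + y(1-(1-ρ)^k) for k ≥ -1 and y ∈ (0,1). Then for every k ≥ 0 and y ∈ (0,1): (1-ρ)/((1-ρφ^(-k)(y))(1-ρ+ρφ^(-k)(y))) = a_k(y)²/(a_{k+1}(y)·a_{k-1}(y)), where φ^(-k) denotes the k-fold inverse iterate φ^(-k)(y) = y/((1-ρ)^k + y(1-(1-ρ)^k)); consequently the telescoping product ∏_{k=0}^{n} (1-ρ)/((1-ρφ^(-k)(y))(1-ρ+ρφ^(-k)(y))) = (a₀(y)/a₋₁(y))·(a_n(y)/a_{n+1}(y)). -/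
open Finset

/-! With `t = 1 - ρ`, the numbers `a k y = t ^ k + y * (1 - t ^ k)` satisfy the affine recurrence
`a (k + 1) = t * a k + ρ * y`, and `φ^(-k) y = y / a k y`. Hence `1 - ρ φ^(-k) y = t * a (k - 1) / a k`
and `1 - ρ + ρ φ^(-k) y = a (k + 1) / a k`, which gives the factor `a k ^ 2 / (a (k + 1) * a (k - 1))`.
This is `g k / g (k + 1)` for `g k = a k / a (k - 1)`, so the product telescopes. -/

theorem Finset.prod_range_div₀' {K : Type*} [Field K] {f : ℕ → K} (hf : ∀ n, f n ≠ 0)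
    (n : ℕ) : ∏ i ∈ range n, f i / f (i + 1) = f 0 / f n := by
  apply prod_range_induction
  · exact div_self (hf 0)
  · intro k _
    exact (div_mul_div_cancel₀ (hf k)).symm

theorem zpow_add_mul_one_sub_zpow_pos {t y : ℝ} (ht : 0 < t) (hy : y ∈ Set.Ioo 0 1) (k : ℤ) :
    0 < t ^ k + y * (1 - t ^ k) := by
  have := zpow_pos ht k
  nlinarith [hy.1, hy.2]

theorem zpow_succ_add_mul_one_sub_zpow {t : ℝ} (ht : t ≠ 0) (y : ℝ) (k : ℤ) :
    t ^ (k + 1) + y * (1 - t ^ (k + 1)) = t * (t ^ k + y * (1 - t ^ k)) + (1 - t) * y := by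
  rw [zpow_add_one₀ ht]
  ring

theorem one_sub_div_mul_one_sub_add_eq {ρ y A B C : ℝ} (hρ : 1 - ρ ≠ 0) (hA : A ≠ 0)
    (hB : B = (1 - ρ) * A + ρ * y) (hC : A = (1 - ρ) * C + ρ * y) :
    (1 - ρ) / ((1 - ρ * (y / A)) * (1 - ρ + ρ * (y / A))) = A ^ 2 / (B * C) := by
  have hsub : 1 - ρ * (y / A) = (1 - ρ) * C / A := by
    field_simp
    linarith
  have hadd : 1 - ρ + ρ * (y / A) = B / A := by
    field_simp
    linarith
  rw [hsub, hadd]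
  field_simp

theorem telescoping_product (ρ : ℝ) (hρ : ρ ∈ Set.Ioo (0:ℝ) 1)
    (a : ℤ → ℝ → ℝ) (ha : ∀ k y, a k y = (1 - ρ) ^ k + y * (1 - (1 - ρ) ^ k))
    (ψ : ℕ → ℝ → ℝ)
    (hψ : ∀ k y, ψ k y = y / ((1 - ρ) ^ k + y * (1 - (1 - ρ) ^ k))) :
    (∀ k : ℕ, ∀ y ∈ Set.Ioo (0:ℝ) 1,
      (1 - ρ) / ((1 - ρ * ψ k y) * (1 - ρ + ρ * ψ k y))
        = (a k y) ^ 2 / (a (k + 1) y * a ((k : ℤ) - 1) y)) ∧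
    (∀ n : ℕ, ∀ y ∈ Set.Ioo (0:ℝ) 1,
      (∏ k ∈ Finset.range (n + 1),
        (1 - ρ) / ((1 - ρ * ψ k y) * (1 - ρ + ρ * ψ k y)))
        = (a 0 y / a (-1) y) * (a n y / a (n + 1) y)) := by
  have ht : 0 < 1 - ρ := sub_pos.mpr hρ.2
  have hpos : ∀ k, ∀ y ∈ Set.Ioo (0:ℝ) 1, 0 < a k y := fun k y hy ↦
    (ha k y).symm ▸ zpow_add_mul_one_sub_zpow_pos ht hy k
  have hsucc : ∀ k y, a (k + 1) y = (1 - ρ) * a k y + ρ * y := fun k y ↦ by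
    rw [ha, ha, zpow_succ_add_mul_one_sub_zpow ht.ne', sub_sub_cancel]
  have hψa : ∀ (k : ℕ) y, ψ k y = y / a k y := fun k y ↦ by
    rw [hψ, ha, zpow_natCast]
  have hfactor : ∀ k : ℕ, ∀ y ∈ Set.Ioo (0:ℝ) 1,
      (1 - ρ) / ((1 - ρ * ψ k y) * (1 - ρ + ρ * ψ k y))
        = (a k y) ^ 2 / (a (k + 1) y * a ((k : ℤ) - 1) y) := fun k y hy ↦ by
    rw [hψa]
    refine one_sub_div_mul_one_sub_add_eq ht.ne' (hpos k y hy).ne' (hsucc k y) ?_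
    simpa using hsucc (k - 1) y
  refine ⟨hfactor, fun n y hy ↦ ?_⟩
  set g : ℕ → ℝ := fun k ↦ a k y / a ((k : ℤ) - 1) y
  have hg : ∀ k, g k ≠ 0 := fun k ↦ (div_pos (hpos _ y hy) (hpos _ y hy)).ne'
  have hfactor_g : ∀ k : ℕ, (1 - ρ) / ((1 - ρ * ψ k y) * (1 - ρ + ρ * ψ k y)) = g k / g (k + 1) :=
    fun k ↦ by
      simp only [hfactor k y hy, g, Nat.cast_add, Nat.cast_one, add_sub_cancel_right]
      rw [div_div_div_eq]
      ring
  rw [prod_congr rfl fun k _ ↦ hfactor_g k, prod_range_div₀' hg]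
  simp only [g, Nat.cast_zero, zero_sub, Nat.cast_add, Nat.cast_one, add_sub_cancel_right]
  rw [div_div_eq_mul_div, mul_div_assoc]
end
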